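/- arXiv:math/0201303 — 5 statements merged into one kernel-verified Lean document; each statement's English description precedes it below -/
import Mathlib

section
/- Let (G_n) and (K_n) be groups (n ≥ 1) with K_1 ∪ ... ∪ K_n ⊆ G_n and K_n normal in G_n for every n. Then the product set Π_{n=1}^∞ K_n is a group under the binary operation defined coordinatewise by [(x_1,x_2,...)∗(y_1,y_2,...)]_n = (y_1···y_{n-1})^{-1} x_n (y_1···y_{n-1}) y_n, with multiplication performed in G_n. -/
/-- Twisted product: given groups `G n`, `K n` (realized as subgroups of an ambient group)
with `K i ⊆ G n` for `i ≤ n` and `K n` normal in `G n`, the product set `Π K n` forms a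
group under `[(x ∗ y)]ₙ = (y₀⋯y_{n-1})⁻¹ xₙ (y₀⋯y_{n-1}) yₙ` (computed in `G n`). -/
theorem twisted_product_is_group
    (A : Type*) [Group A] (G K : ℕ → Subgroup A)
    (hsub : ∀ i n : ℕ, i ≤ n → (K i : Set A) ⊆ (G n : Set A))
    (hnorm : ∀ n : ℕ, ∀ g ∈ G n, ∀ k ∈ K n, g * k * g⁻¹ ∈ K n) :
    ∀ p : (ℕ → A) → ℕ → A, (∀ y n, p y n = ((List.range n).map y).prod) →
    ∀ op : (ℕ → A) → (ℕ → A) → (ℕ → A),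
      (∀ x y n, op x y n = (p y n)⁻¹ * x n * p y n * y n) →
    ∀ S : Set (ℕ → A), S = {x | ∀ n, x n ∈ K n} →
      (∀ x ∈ S, ∀ y ∈ S, op x y ∈ S) ∧
      (∀ x ∈ S, ∀ y ∈ S, ∀ z ∈ S, op (op x y) z = op x (op y z)) ∧
      ((fun _ => (1 : A)) ∈ S ∧
        ∀ x ∈ S, op x (fun _ => 1) = x ∧ op (fun _ => 1) x = x) ∧
      (∀ y ∈ S, ∃ x ∈ S, op x y = (fun _ => 1) ∧ op y x = (fun _ => 1)) := by
  intro p hp op hop S hS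
  subst hS
  -- basic facts about p
  have hp0 : ∀ y, p y 0 = 1 := by intro y; simp [hp]
  have hps : ∀ y n, p y (n + 1) = p y n * y n := by
    intro y n
    simp [hp, List.range_succ]
  -- p of a member lies in G n
  have hpG : ∀ y : ℕ → A, (∀ n, y n ∈ K n) → ∀ n, p y n ∈ G n := by
    intro y hy n
    rw [hp]
    apply list_prod_mem
    intro a ha
    rcases List.mem_map.mp ha with ⟨i, hi, rfl⟩
    exact hsub i n (Nat.le_of_lt (List.mem_range.mp hi)) (hy i)
  -- key telescoping identity
  have hkey : ∀ x y n, p (op x y) n = p x n * p y n := by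
    intro x y n
    induction n with
    | zero => simp [hp0]
    | succ n ih =>
      rw [hps, hps, hps, ih, hop]
      group
  refine ⟨?_, ?_, ⟨?_, ?_⟩, ?_⟩
  · -- closure
    intro x hx y hy n
    rw [hop]
    have hg := hpG y hy n
    have : (p y n)⁻¹ * x n * p y n ∈ K n := by
      have := hnorm n (p y n)⁻¹ (inv_mem hg) (x n) (hx n)
      simpa using this
    exact mul_mem this (hy n)
  · -- associativity
    intro x _ y _ z _
    funext n
    rw [hop, hop, hop, hop, hkey]
    group
  · -- identity membership
    intro n; exact one_mem _
  · -- identity laws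
    intro x hx
    constructor
    · have h1 : ∀ n, p (fun _ => (1 : A)) n = 1 := by
        intro n; rw [hp]; simp
      funext n; rw [hop, h1]; group
    · funext n; rw [hop]; group
  · -- inverses
    intro y hy
    refine ⟨fun n => p y n * (y n)⁻¹ * (p y n)⁻¹, ?_, ?_, ?_⟩
    · intro n
      exact hnorm n (p y n) (hpG y hy n) (y n)⁻¹ (inv_mem (hy n))
    · funext n; rw [hop]; group
    · have hpx : ∀ n, p (fun n => p y n * (y n)⁻¹ * (p y n)⁻¹) n = (p y n)⁻¹ := by
        intro n
        induction n with
        | zero => simp [hp0]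
        | succ n ih => rw [hps, hps, ih]; group
      funext n
      rw [hop, hpx]
      group
end

section
/- Let G be a group with subgroups {id} = G_0 ⊆ G_1 ⊆ G_2 ⊆ ... ⊆ G and homomorphisms φ_n : G → G_n (n ≥ 0) with φ_n restricted to G_n equal to the identity. Set ψ_n = φ_{n-1} restricted to G_n and K_n = ker ψ_n. Then the map φ : G → Π_{G_n} K_n defined by (φ(g))_n = (φ_{n-1}(g))^{-1} φ_n(g) is well defined (each coordinate lies in K_n) and is a group homomorphism into the twisted product. -/
/-- Given a group `Gr` with subgroups `{1} = Gs 0 ⊆ Gs 1 ⊆ …` and homomorphisms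
`φ n : Gr → Gs n` restricting to the identity on `Gs n` (and compatible:
`φ n ∘ φ (n+1) = φ n`), the map `g ↦ ((φ n g)⁻¹ · φ (n+1) g)ₙ` is well defined
(each coordinate lies in `K (n+1) = ker (φ n |_{Gs (n+1)})`) and is a homomorphism
into the twisted product. -/
theorem phi_into_twisted_product_is_hom
    (Gr : Type*) [Group Gr] (Gs : ℕ → Subgroup Gr)
    (h0 : Gs 0 = ⊥) (hmono : Monotone Gs)
    (φ : ℕ → Gr →* Gr)
    (hmem : ∀ n g, φ n g ∈ Gs n)
    (hid : ∀ n, ∀ g ∈ Gs n, φ n g = g)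
    (hcomp : ∀ n g, φ n (φ (n + 1) g) = φ n g) :
    ∀ Φ : Gr → ℕ → Gr, (∀ g n, Φ g n = (φ n g)⁻¹ * φ (n + 1) g) →
      (∀ g n, Φ g n ∈ Gs (n + 1) ∧ φ n (Φ g n) = 1) ∧
      (∀ g h : Gr, ∀ n,
        Φ (g * h) n =
          (((List.range n).map (Φ h)).prod)⁻¹ * Φ g n *
            ((List.range n).map (Φ h)).prod * Φ h n) := by
  intro Φ hΦ
  have hzero : ∀ g : Gr, φ 0 g = 1 := by
    intro g
    have := hmem 0 g
    rw [h0, Subgroup.mem_bot] at this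
    exact this
  have hprod : ∀ (h : Gr) (n : ℕ), ((List.range n).map (Φ h)).prod = φ n h := by
    intro h n
    induction n with
    | zero => simp [hzero]
    | succ n ih =>
        rw [List.range_succ, List.map_append, List.prod_append, ih]
        simp [hΦ]
  constructor
  · intro g n
    constructor
    · rw [hΦ]
      exact mul_mem (inv_mem (hmono (Nat.le_succ n) (hmem n g))) (hmem (n + 1) g)
    · rw [hΦ, map_mul, map_inv, hcomp, hid n _ (hmem n g), inv_mul_cancel]
  · intro g h n
    rw [hprod, hΦ, hΦ, hΦ, map_mul, map_mul, mul_inv_rev]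
    group
end

section
/- Let {id} = G_0 ⊆ G_1 ⊆ G_2 ⊆ ... be groups and ψ_n : G_n → G_{n-1} epimorphisms with ψ_n restricted to G_{n-1} equal to the identity. Let K_n = ker ψ_n and let lim← G_n = {(g_1,g_2,...) : g_n ∈ G_n, ψ_n(g_n) = g_{n-1}} with coordinatewise multiplication. Then the map ψ : Π_{G_n}K_n → lim← G_n defined by ψ(k_1,k_2,...) = (k_1, k_1k_2, k_1k_2k_3, ...) is a group isomorphism from the twisted product onto the inverse limit. -/
/-- Let `{1} = Gs 0 ⊆ Gs 1 ⊆ …` be groups and `ψ n : Gs (n+1) → Gs n` epimorphisms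
restricting to the identity on `Gs n`, with kernels `K n`.  Then
`Ψ(k₀,k₁,…) = (k₀, k₀k₁, k₀k₁k₂, …)` is a group isomorphism from the twisted product
(with operation `[(x∗y)]ₙ = (y₀⋯y_{n-1})⁻¹ xₙ (y₀⋯y_{n-1}) yₙ`) onto the inverse limit
of the `Gs n` (with coordinatewise multiplication). -/
theorem twisted_product_iso_inverse_limit
    (A : Type*) [Group A] (Gs : ℕ → Subgroup A)
    (h0 : Gs 0 = ⊥) (hmono : Monotone Gs)
    (ψ : ℕ → A → A)
    (hmap : ∀ n, ∀ g ∈ Gs (n + 1), ψ n g ∈ Gs n)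
    (hmul : ∀ n, ∀ g ∈ Gs (n + 1), ∀ h ∈ Gs (n + 1), ψ n (g * h) = ψ n g * ψ n h)
    (hsurj : ∀ n, ∀ h ∈ Gs n, ∃ g ∈ Gs (n + 1), ψ n g = h)
    (hid : ∀ n, ∀ g ∈ Gs n, ψ n g = g) :
    ∀ K : ℕ → Set A, (∀ n, K n = {g | g ∈ Gs (n + 1) ∧ ψ n g = 1}) →
    ∀ S : Set (ℕ → A), S = {x | ∀ n, x n ∈ K n} →
    ∀ L : Set (ℕ → A),
      L = {g | (∀ n, g n ∈ Gs (n + 1)) ∧ ∀ n, ψ (n + 1) (g (n + 1)) = g n} →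
    ∀ Ψ : (ℕ → A) → ℕ → A, (∀ x n, Ψ x n = ((List.range (n + 1)).map x).prod) →
    ∀ op : (ℕ → A) → (ℕ → A) → (ℕ → A),
      (∀ x y n, op x y n =
        (((List.range n).map y).prod)⁻¹ * x n * ((List.range n).map y).prod * y n) →
      Set.BijOn Ψ S L ∧
      (∀ x ∈ S, ∀ y ∈ S, Ψ (op x y) = fun n => Ψ x n * Ψ y n) := by
  intro K hK S hS L hL Ψ hΨ op hop
  -- partial products
  set P : (ℕ → A) → ℕ → A := fun x n => ((List.range n).map x).prod with hP
  have hP0 : ∀ x, P x 0 = 1 := by intro x; simp [hP]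
  have hPsucc : ∀ x n, P x (n + 1) = P x n * x n := by
    intro x n; simp [hP, List.range_succ]
  have hΨP : ∀ x n, Ψ x n = P x (n + 1) := fun x n => hΨ x n
  -- ψ n 1 = 1
  have hone : ∀ n, ψ n (1 : A) = 1 := fun n => hid n 1 (one_mem _)
  -- ψ preserves inverses
  have hinv : ∀ n, ∀ g ∈ Gs (n + 1), ψ n g⁻¹ = (ψ n g)⁻¹ := by
    intro n g hg
    have := hmul n g hg g⁻¹ (inv_mem hg)
    rw [mul_inv_cancel, hone] at this
    exact (inv_eq_of_mul_eq_one_right this.symm).symm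
  -- membership facts for x ∈ S
  have hSmem : ∀ x ∈ S, ∀ n, x n ∈ Gs (n + 1) ∧ ψ n (x n) = 1 := by
    intro x hx n
    have := (hS ▸ hx) n
    rwa [hK n] at this
  -- partial products of x ∈ S lie in Gs n
  have hPmem : ∀ x ∈ S, ∀ n, P x n ∈ Gs n := by
    intro x hx n
    induction n with
    | zero => rw [hP0]; exact one_mem _
    | succ n ih =>
      rw [hPsucc]
      exact mul_mem (hmono (Nat.le_succ n) ih) (hSmem x hx n).1
  -- Ψ maps S into L
  have hmaps : Set.MapsTo Ψ S L := by
    intro x hx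
    rw [hL]
    constructor
    · intro n; rw [hΨP]; exact hPmem x hx (n + 1)
    · intro n
      rw [hΨP, hΨP, hPsucc x (n + 1),
        hmul (n + 1) _ (hmono (Nat.le_succ (n + 1)) (hPmem x hx (n + 1))) _
          (hSmem x hx (n + 1)).1,
        hid (n + 1) _ (hPmem x hx (n + 1)), (hSmem x hx (n + 1)).2, mul_one]
  -- injectivity
  have hinj : Set.InjOn Ψ S := by
    intro x hx y hy hxy
    have hPeq : ∀ n, P x n = P y n := by
      intro n
      cases n with
      | zero => rw [hP0, hP0]
      | succ n => rw [← hΨP, ← hΨP, hxy]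
    funext n
    have h1 := hPsucc x n
    rw [hPeq n, hPeq (n + 1), hPsucc y n] at h1
    exact (mul_left_cancel h1).symm
  -- surjectivity
  have hsurjon : Set.SurjOn Ψ S L := by
    intro g hg
    rw [hL] at hg
    obtain ⟨hg1, hg2⟩ := hg
    refine ⟨fun n => Nat.rec (g 0) (fun m _ => (g m)⁻¹ * g (m + 1)) n, ?_, ?_⟩
    · rw [hS]
      intro n
      rw [hK n]
      cases n with
      | zero =>
        refine ⟨hg1 0, ?_⟩
        have := hmap 0 (g 0) (hg1 0)
        rw [h0] at this
        simpa using this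
      | succ n =>
        constructor
        · exact mul_mem (inv_mem (hmono (Nat.le_succ (n + 1)) (hg1 n))) (hg1 (n + 1))
        · show ψ (n + 1) ((g n)⁻¹ * g (n + 1)) = 1
          rw [hmul (n + 1) _ (inv_mem (hmono (Nat.le_succ (n + 1)) (hg1 n)))
              _ (hg1 (n + 1)),
            hinv (n + 1) (g n) (hmono (Nat.le_succ (n + 1)) (hg1 n)),
            hid (n + 1) (g n) (hg1 n), hg2 n,
            inv_mul_cancel]
    · funext n
      rw [hΨP]
      induction n with
      | zero => rw [hPsucc, hP0, one_mul]; exact rfl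
      | succ n ih =>
        rw [hPsucc, ih]
        show g n * ((g n)⁻¹ * g (n + 1)) = g (n + 1)
        rw [mul_inv_cancel_left]
  -- homomorphism property
  have hhom : ∀ x y, ∀ n, P (op x y) n = P x n * P y n := by
    intro x y n
    induction n with
    | zero => rw [hP0, hP0, hP0, one_mul]
    | succ n ih =>
      rw [hPsucc, hPsucc, hPsucc, ih, hop x y n]
      show P x n * P y n * ((P y n)⁻¹ * x n * P y n * y n) = P x n * x n * (P y n * y n)
      group
  refine ⟨⟨hmaps, hinj, hsurjon⟩, ?_⟩
  intro x hx y hy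
  funext n
  rw [hΨP, hΨP, hΨP, hhom]
end

section
/- With the hypotheses of the previous isomorphism, if each G_n carries the discrete topology and both Π_{G_n}K_n and lim← G_n ⊆ Π G_n carry the product (subspace) topology, then ψ(k_1,k_2,...) = (k_1, k_1k_2, ...) is a homeomorphism. -/
/-!
Taking partial products `x ↦ (x₀, x₀x₁, x₀x₁x₂, …)` is a self-homeomorphism of `ℕ → A` for any
topological group `A`, with inverse the successive quotients `g ↦ (g₀, g₀⁻¹g₁, g₁⁻¹g₂, …)`: each
coordinate of either map is a finite product of coordinates. Because `ψ` is the identity on the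
smaller group and multiplicative, a sequence lies in the twisted product of the kernels exactly
when its partial products form a compatible sequence, so this homeomorphism restricts to one
between the twisted product and the inverse limit.
-/

section PartialProducts

variable {A : Type*}

section Monoid

variable [Monoid A]

def partialProds (x : ℕ → A) (n : ℕ) : A :=
  ((List.range (n + 1)).map x).prod

@[simp]
lemma partialProds_zero (x : ℕ → A) : partialProds x 0 = x 0 := by
  simp [partialProds]

lemma partialProds_succ (x : ℕ → A) (n : ℕ) :
    partialProds x (n + 1) = partialProds x n * x (n + 1) := by
  rw [partialProds, partialProds, List.range_succ, List.map_append, List.prod_append]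
  simp

lemma continuous_partialProds [TopologicalSpace A] [ContinuousMul A] :
    Continuous (partialProds : (ℕ → A) → ℕ → A) :=
  continuous_pi fun _ => continuous_list_prod _ fun i _ => continuous_apply i

end Monoid

variable [Group A]

def successiveQuotients (g : ℕ → A) : ℕ → A
  | 0 => g 0
  | n + 1 => (g n)⁻¹ * g (n + 1)

lemma successiveQuotients_partialProds (x : ℕ → A) : successiveQuotients (partialProds x) = x := by
  funext n
  cases n with
  | zero => exact partialProds_zero x
  | succ n => simp [successiveQuotients, partialProds_succ]

lemma partialProds_successiveQuotients (g : ℕ → A) : partialProds (successiveQuotients g) = g := by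
  funext n
  induction n with
  | zero => exact partialProds_zero _
  | succ n ih => simp [partialProds_succ, ih, successiveQuotients]

variable [TopologicalSpace A] [IsTopologicalGroup A]

lemma continuous_successiveQuotients : Continuous (successiveQuotients : (ℕ → A) → ℕ → A) := by
  refine continuous_pi fun n => ?_
  cases n with
  | zero => exact continuous_apply 0
  | succ n => exact (continuous_apply n).inv.mul (continuous_apply (n + 1))

variable (A) in
def partialProdsHomeomorph : (ℕ → A) ≃ₜ (ℕ → A) where
  toFun := partialProds
  invFun := successiveQuotients
  left_inv := successiveQuotients_partialProds
  right_inv := partialProds_successiveQuotients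
  continuous_toFun := continuous_partialProds
  continuous_invFun := continuous_successiveQuotients

end PartialProducts

section TwistedProduct

variable {A : Type*} [Group A] {Gs : ℕ → Subgroup A} {ψ : ℕ → A → A}

variable (Gs ψ) in
def twistedProduct : Set (ℕ → A) :=
  {x | ∀ n, x n ∈ Gs (n + 1) ∧ ψ n (x n) = 1}

variable (Gs ψ) in
def inverseLimit : Set (ℕ → A) :=
  {g | (∀ n, g n ∈ Gs (n + 1)) ∧ ∀ n, ψ (n + 1) (g (n + 1)) = g n}

lemma partialProds_mem_inverseLimit (hmono : Monotone Gs)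
    (hmul : ∀ n, ∀ g ∈ Gs (n + 1), ∀ h ∈ Gs (n + 1), ψ n (g * h) = ψ n g * ψ n h)
    (hid : ∀ n, ∀ g ∈ Gs n, ψ n g = g) {x : ℕ → A} (hx : x ∈ twistedProduct Gs ψ) :
    partialProds x ∈ inverseLimit Gs ψ := by
  have hmem : ∀ n, partialProds x n ∈ Gs (n + 1) := by
    intro n
    induction n with
    | zero => simpa using (hx 0).1
    | succ n ih =>
      rw [partialProds_succ]
      exact mul_mem (hmono (n + 1).le_succ ih) (hx (n + 1)).1
  refine ⟨hmem, fun n => ?_⟩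
  rw [partialProds_succ, hmul (n + 1) _ (hmono (n + 1).le_succ (hmem n)) _ (hx (n + 1)).1,
    hid _ _ (hmem n), (hx (n + 1)).2, mul_one]

lemma successiveQuotients_mem_twistedProduct (hψ₀ : ∀ g ∈ Gs 1, ψ 0 g = 1) (hmono : Monotone Gs)
    (hmul : ∀ n, ∀ g ∈ Gs (n + 1), ∀ h ∈ Gs (n + 1), ψ n (g * h) = ψ n g * ψ n h)
    (hid : ∀ n, ∀ g ∈ Gs n, ψ n g = g) {g : ℕ → A} (hg : g ∈ inverseLimit Gs ψ) :
    successiveQuotients g ∈ twistedProduct Gs ψ := by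
  obtain ⟨hmem, hcompat⟩ := hg
  intro n
  cases n with
  | zero => exact ⟨hmem 0, hψ₀ _ (hmem 0)⟩
  | succ n =>
    have hprev : g n ∈ Gs (n + 2) := hmono n.succ.le_succ (hmem n)
    have hquot : (g n)⁻¹ * g (n + 1) ∈ Gs (n + 2) := mul_mem (inv_mem hprev) (hmem (n + 1))
    refine ⟨hquot, ?_⟩
    -- apply `ψ (n + 1)` to `g (n + 1) = g n * ((g n)⁻¹ * g (n + 1))`
    have h := hmul _ _ hprev _ hquot
    rw [mul_inv_cancel_left, hcompat, hid _ _ (hmem n)] at h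
    exact mul_eq_left.mp h.symm

end TwistedProduct

theorem twisted_product_homeomorph_inverse_limit_general
    (A : Type*) [Group A] [TopologicalSpace A] [DiscreteTopology A]
    (Gs : ℕ → Subgroup A)
    (h0 : Gs 0 = ⊥) (hmono : Monotone Gs)
    (ψ : ℕ → A → A)
    (hmap : ∀ n, ∀ g ∈ Gs (n + 1), ψ n g ∈ Gs n)
    (hmul : ∀ n, ∀ g ∈ Gs (n + 1), ∀ h ∈ Gs (n + 1), ψ n (g * h) = ψ n g * ψ n h)
    (hid : ∀ n, ∀ g ∈ Gs n, ψ n g = g) :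
    ∀ K : ℕ → Set A, (∀ n, K n = {g | g ∈ Gs (n + 1) ∧ ψ n g = 1}) →
    ∀ S : Set (ℕ → A), S = {x | ∀ n, x n ∈ K n} →
    ∀ L : Set (ℕ → A),
      L = {g | (∀ n, g n ∈ Gs (n + 1)) ∧ ∀ n, ψ (n + 1) (g (n + 1)) = g n} →
    ∀ Ψ : (ℕ → A) → ℕ → A, (∀ x n, Ψ x n = ((List.range (n + 1)).map x).prod) →
      ∃ h : {x : ℕ → A // x ∈ S} ≃ₜ {g : ℕ → A // g ∈ L},
        ∀ x : {x : ℕ → A // x ∈ S}, (h x : ℕ → A) = Ψ (x : ℕ → A) := by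
  intro K hK S hS L hL Ψ hΨ
  obtain rfl : K = fun n => {g | g ∈ Gs (n + 1) ∧ ψ n g = 1} := funext hK
  obtain rfl : Ψ = partialProds := funext fun x => funext (hΨ x)
  subst hS hL
  have hψ₀ : ∀ g ∈ Gs 1, ψ 0 g = 1 := fun g hg => by
    simpa [h0] using hmap 0 g hg
  have hiff (x : ℕ → A) : x ∈ twistedProduct Gs ψ ↔ partialProds x ∈ inverseLimit Gs ψ :=
    ⟨partialProds_mem_inverseLimit hmono hmul hid, fun h => successiveQuotients_partialProds x ▸
      successiveQuotients_mem_twistedProduct hψ₀ hmono hmul hid h⟩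
  exact ⟨(partialProdsHomeomorph A).subtype hiff, fun _ => rfl⟩

/-- With the hypotheses of the twisted-product/inverse-limit isomorphism, if the ambient
group is discrete and both the twisted product `Π K n` and the inverse limit
`lim← Gs n ⊆ Π Gs n` carry the product (subspace) topology, then
`Ψ(k₀,k₁,…) = (k₀, k₀k₁, …)` is a homeomorphism. -/
theorem twisted_product_homeomorph_inverse_limit
    (A : Type*) [Group A] [TopologicalSpace A] [DiscreteTopology A]
    (Gs : ℕ → Subgroup A)
    (h0 : Gs 0 = ⊥) (hmono : Monotone Gs)
    (ψ : ℕ → A → A)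
    (hmap : ∀ n, ∀ g ∈ Gs (n + 1), ψ n g ∈ Gs n)
    (hmul : ∀ n, ∀ g ∈ Gs (n + 1), ∀ h ∈ Gs (n + 1), ψ n (g * h) = ψ n g * ψ n h)
    (hsurj : ∀ n, ∀ h ∈ Gs n, ∃ g ∈ Gs (n + 1), ψ n g = h)
    (hid : ∀ n, ∀ g ∈ Gs n, ψ n g = g) :
    ∀ K : ℕ → Set A, (∀ n, K n = {g | g ∈ Gs (n + 1) ∧ ψ n g = 1}) →
    ∀ S : Set (ℕ → A), S = {x | ∀ n, x n ∈ K n} →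
    ∀ L : Set (ℕ → A),
      L = {g | (∀ n, g n ∈ Gs (n + 1)) ∧ ∀ n, ψ (n + 1) (g (n + 1)) = g n} →
    ∀ Ψ : (ℕ → A) → ℕ → A, (∀ x n, Ψ x n = ((List.range (n + 1)).map x).prod) →
      ∃ h : {x : ℕ → A // x ∈ S} ≃ₜ {g : ℕ → A // g ∈ L},
        ∀ x : {x : ℕ → A // x ∈ S}, (h x : ℕ → A) = Ψ (x : ℕ → A) :=
  twisted_product_homeomorph_inverse_limit_general A Gs h0 hmono ψ hmap hmul hid
end

section
/- For every bijection τ of Z = {1,2,3,...} there exists a sequence m_1 ≤ m_2 ≤ ... with m_k ≥ k such that for all k ≥ 1, the restriction of τ^{-1} to {1,...,k} equals the restriction of (σ_{k,m_k} ∘ ··· ∘ σ_{2,m_2} ∘ σ_{1,m_1})^{-1} to {1,...,k}, where σ_{n,m} is the cycle sending i ↦ i+1 for n ≤ i ≤ m−1, m ↦ n, and fixing all other points. -/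
/-- Normal form for permutations of the countable discrete set: for every bijection `τ`
of `ℕ` there is a sequence `m` with `m k ≥ k` such that for all `k`, the restriction of
`τ⁻¹` to `{0,…,k}` equals the restriction of `(σ (k, m k) ∘ ⋯ ∘ σ (0, m 0))⁻¹`, where
`σ (n, m)` (for `n ≤ m`) is the cycle sending `i ↦ i+1` for `n ≤ i ≤ m-1`, `m ↦ n`, and
fixing all other points. -/
theorem perm_normal_form
    (σ : ℕ → ℕ → Equiv.Perm ℕ)
    (hσ : ∀ n m : ℕ, n ≤ m →
      (∀ i, n ≤ i → i < m → σ n m i = i + 1) ∧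
      σ n m m = n ∧
      (∀ i, i < n ∨ m < i → σ n m i = i)) :
    ∀ τ : Equiv.Perm ℕ, ∃ m : ℕ → ℕ,
      (∀ k, k ≤ m k) ∧
      ∀ k, ∀ i ≤ k,
        τ.symm i =
          ((((List.range (k + 1)).reverse).map (fun j => σ j (m j))).prod)⁻¹ i := by
  intro τ
  -- recursive construction: f k = (m k, P k) where P k = σ k (m k) * ... * σ 0 (m 0)
  let f : ℕ → ℕ × Equiv.Perm ℕ := fun k =>
    Nat.rec (τ.symm 0, σ 0 (τ.symm 0))
      (fun k p => (p.2 (τ.symm (k+1)), σ (k+1) (p.2 (τ.symm (k+1))) * p.2)) k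
  have hm : ∀ k, (f (k+1)).1 = (f k).2 (τ.symm (k+1)) := fun k => rfl
  have hP : ∀ k, (f (k+1)).2 = σ (k+1) ((f (k+1)).1) * (f k).2 := fun k => rfl
  have main : ∀ k, k ≤ (f k).1 ∧ ∀ i ≤ k, (f k).2 (τ.symm i) = i := by
    intro k
    induction k with
    | zero =>
      refine ⟨Nat.zero_le _, ?_⟩
      intro i hi
      have : i = 0 := Nat.le_zero.mp hi
      subst this
      exact (hσ 0 (τ.symm 0) (Nat.zero_le _)).2.1
    | succ k ih =>
      have hmk : k + 1 ≤ (f (k+1)).1 := by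
        by_contra h
        push_neg at h
        have hle : (f (k+1)).1 ≤ k := Nat.lt_succ_iff.mp h
        have h1 : (f k).2 (τ.symm ((f (k+1)).1)) = (f (k+1)).1 := ih.2 _ hle
        rw [hm k] at h1
        have h2 := (f k).2.injective h1
        have h3 := τ.symm.injective h2
        rw [← hm k] at h3
        omega
      refine ⟨hmk, ?_⟩
      intro i hi
      rw [hP k, Equiv.Perm.mul_apply]
      rcases Nat.lt_succ_iff_lt_or_eq.mp (Nat.lt_succ_of_le hi) with hlt | heq
      · rw [ih.2 i (Nat.lt_succ_iff.mp hlt)]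
        exact (hσ (k+1) _ hmk).2.2 i (Or.inl hlt)
      · subst heq
        rw [← hm k]
        exact (hσ (k+1) _ hmk).2.1
  have hprod : ∀ k,
      (((List.range (k+1)).reverse).map (fun j => σ j ((f j).1))).prod = (f k).2 := by
    intro k
    induction k with
    | zero => simp; rfl
    | succ k ih =>
      rw [List.range_succ, List.reverse_append]
      simp only [List.reverse_singleton, List.singleton_append, List.map_cons, List.prod_cons]
      rw [ih]
  refine ⟨fun k => (f k).1, fun k => (main k).1, ?_⟩
  intro k i hi
  rw [hprod k, Equiv.Perm.inv_def, eq_comm, Equiv.symm_apply_eq, eq_comm]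
  exact (main k).2 i hi
end
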